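/- The real Haagerup function h(x) = x ∫₀^{π/2} cos²t / (1 − x² sin²t)^{1/2} dt has the Taylor expansion h(x) = Σ_{k=0}^∞ (π/(4(k+1))) · ((2k−1)!!/(2k)!!)² · x^{2k+1}, valid for x ∈ [−1, 1]. -/

import Mathlib

open Real Finset

noncomputable def rr (k : ℕ) : ℝ :=
  (Nat.doubleFactorial (2 * k - 1) : ℝ) / (Nat.doubleFactorial (2 * k))

lemma rr_zero : rr 0 = 1 := by simp [rr]

lemma rr_pos (k : ℕ) : 0 < rr k :=
  div_pos (by exact_mod_cast Nat.doubleFactorial_pos _)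
    (by exact_mod_cast Nat.doubleFactorial_pos _)

lemma rr_succ (k : ℕ) : rr (k + 1) = rr k * ((2 * k + 1) / (2 * k + 2)) := by
  have h1 : 2 * (k + 1) - 1 = 2 * k + 1 := by omega
  have h2 : 2 * (k + 1) = 2 * k + 2 := by omega
  have e1 : Nat.doubleFactorial (2 * k + 1) = (2 * k + 1) * Nat.doubleFactorial (2 * k - 1) := by
    simpa using Nat.doubleFactorial_add_one (2 * k)
  have e2 : Nat.doubleFactorial (2 * k + 2) = (2 * k + 2) * Nat.doubleFactorial (2 * k) :=
    Nat.doubleFactorial_add_two (2 * k)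
  have p1 : ((Nat.doubleFactorial (2 * k) : ℝ)) ≠ 0 := by
    exact_mod_cast (Nat.doubleFactorial_pos _).ne'
  rw [rr, rr, h1, h2, e1, e2]
  push_cast
  field_simp

lemma rr_rec (k : ℕ) : (2 * (k : ℝ) + 2) * rr (k + 1) = (2 * k + 1) * rr k := by
  rw [rr_succ]
  have : (2 * (k : ℝ) + 2) ≠ 0 := by positivity
  field_simp

lemma rr_le_one (k : ℕ) : rr k ≤ 1 := by
  induction k with
  | zero => simp [rr_zero]
  | succ n ih =>
    rw [rr_succ]
    have h1 : (2 * (n:ℝ) + 1) / (2 * n + 2) ≤ 1 := by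
      rw [div_le_one (by positivity)]; linarith
    calc rr n * ((2 * n + 1) / (2 * n + 2)) ≤ 1 * 1 :=
          mul_le_mul ih h1 (by positivity) (by linarith)
      _ = 1 := by ring

lemma rr_conv (k : ℕ) : ∑ i ∈ range (k + 1), rr i * rr (k - i) = 1 := by
  induction k with
  | zero => simp [rr_zero]
  | succ k ih =>
    -- A = ∑ (2i+1) rr i rr (k-i)
    set A : ℝ := ∑ i ∈ range (k + 1), ((2 * i + 1 : ℕ) : ℝ) * (rr i * rr (k - i)) with hA
    have hrefl : A = ∑ i ∈ range (k + 1), ((2 * (k - i) + 1 : ℕ) : ℝ) * (rr (k - i) * rr i) := by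
      rw [hA, ← Finset.sum_range_reflect (fun i => ((2 * i + 1 : ℕ) : ℝ) * (rr i * rr (k - i))) (k+1)]
      refine Finset.sum_congr rfl fun i hi => ?_
      have hik : i ≤ k := by simpa [Nat.lt_succ_iff] using hi
      have : k - (k - i) = i := by omega
      simp only [Nat.succ_sub_one, this]
    have h2A : 2 * A = (2 * (k:ℝ) + 2) * ∑ i ∈ range (k + 1), rr i * rr (k - i) := by
      have : 2 * A = A + A := by ring
      rw [this]
      nth_rewrite 2 [hrefl]
      rw [hA, ← Finset.sum_add_distrib, Finset.mul_sum]
      refine Finset.sum_congr rfl fun i hi => ?_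
      have hik : i ≤ k := by simpa [Nat.lt_succ_iff] using hi
      have hcast : ((2 * (k - i) + 1 : ℕ) : ℝ) = 2 * ((k:ℝ) - i) + 1 := by
        push_cast [Nat.cast_sub hik]; ring
      rw [hcast]
      push_cast
      ring
    -- B = ∑_{j< k+2} 2j rr j rr (k+1-j) equals A via recurrence
    have hB : A = ∑ j ∈ range (k + 2), ((2 * j : ℕ) : ℝ) * (rr j * rr (k + 1 - j)) := by
      rw [Finset.sum_range_succ' (fun j => ((2 * j : ℕ) : ℝ) * (rr j * rr (k + 1 - j))) (k+1)]
      simp only [Nat.mul_zero, Nat.cast_zero, zero_mul, add_zero, Nat.cast_ofNat]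
      rw [hA]
      refine Finset.sum_congr rfl fun i hi => ?_
      have : k + 1 - (i + 1) = k - i := by omega
      rw [this]
      have hrec := rr_rec i
      push_cast
      nlinarith [hrec, rr_pos (k - i)]
    -- B = (k+1) * S (k+1)
    have hBrefl : ∑ j ∈ range (k + 2), ((2 * j : ℕ) : ℝ) * (rr j * rr (k + 1 - j))
        = ∑ j ∈ range (k + 2), ((2 * (k + 1 - j) : ℕ) : ℝ) * (rr (k + 1 - j) * rr j) := by
      rw [← Finset.sum_range_reflect (fun j => ((2 * j : ℕ) : ℝ) * (rr j * rr (k + 1 - j))) (k+2)]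
      refine Finset.sum_congr rfl fun j hj => ?_
      have hjk : j ≤ k + 1 := by simpa [Nat.lt_succ_iff] using hj
      have : k + 1 - (k + 1 - j) = j := by omega
      simp only [Nat.succ_sub_one, this]
    have h2B : 2 * A = (2 * (k:ℝ) + 2) * ∑ j ∈ range (k + 2), rr j * rr (k + 1 - j) := by
      rw [two_mul, hB]
      nth_rewrite 2 [hBrefl]
      rw [← Finset.sum_add_distrib, Finset.mul_sum]
      refine Finset.sum_congr rfl fun j hj => ?_
      have hjk : j ≤ k + 1 := by simpa [Nat.lt_succ_iff] using hj
      have hcast : ((2 * (k + 1 - j) : ℕ) : ℝ) = 2 * ((k:ℝ) + 1 - j) := by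
        push_cast [Nat.cast_sub hjk]; ring
      rw [hcast]
      push_cast
      ring
    rw [ih, mul_one] at h2A
    have hk2 : (2 * (k:ℝ) + 2) ≠ 0 := by positivity
    have hS : (2 * (k:ℝ) + 2) * (∑ j ∈ range (k + 2), rr j * rr (k + 1 - j)) = (2 * (k:ℝ) + 2) * 1 := by
      rw [mul_one, ← h2B, h2A]
    have := mul_left_cancel₀ hk2 hS
    simpa using this

lemma rr_sq_le (k : ℕ) : rr k ^ 2 * (2 * k + 1) ≤ 1 := by
  induction k with
  | zero => simp [rr_zero]
  | succ n ih =>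
    have hrec := rr_rec n
    have hsq2 : (2 * (n:ℝ) + 2) ^ 2 * rr (n + 1) ^ 2 = (2 * n + 1) ^ 2 * rr n ^ 2 := by
      have := congrArg (fun z : ℝ => z ^ 2) hrec
      simpa [mul_pow] using this
    have hp := (rr_pos n).le
    have hp2 := (rr_pos (n + 1)).le
    have hsqn := sq_nonneg (rr (n + 1))
    push_cast
    nlinarith [hsq2, ih, sq_nonneg ((n:ℝ)), mul_nonneg hp hp,
      mul_nonneg (mul_nonneg hp hp) (by positivity : (0:ℝ) ≤ 2 * (n:ℝ) + 1)]

lemma summable_rr_pow {u : ℝ} (h0 : 0 ≤ u) (h1 : u < 1) :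
    Summable (fun k : ℕ => rr k * u ^ k) := by
  refine Summable.of_nonneg_of_le
    (fun k => mul_nonneg (rr_pos k).le (pow_nonneg h0 k))
    (fun k => ?_) (summable_geometric_of_lt_one h0 h1)
  calc rr k * u ^ k ≤ 1 * u ^ k :=
        mul_le_mul_of_nonneg_right (rr_le_one k) (pow_nonneg h0 k)
    _ = u ^ k := one_mul _

lemma hasSum_rr {u : ℝ} (h0 : 0 ≤ u) (h1 : u < 1) :
    HasSum (fun k : ℕ => rr k * u ^ k) (1 / Real.sqrt (1 - u)) := by
  have hsub : (0:ℝ) < 1 - u := by linarith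
  have hsum := summable_rr_pow h0 h1
  have hnorm : Summable (fun k : ℕ => ‖rr k * u ^ k‖) := by
    refine hsum.congr fun k => ?_
    rw [Real.norm_of_nonneg (mul_nonneg (rr_pos k).le (pow_nonneg h0 k))]
  set T := ∑' k, rr k * u ^ k with hT
  have hT0 : 0 ≤ T :=
    tsum_nonneg fun k => mul_nonneg (rr_pos k).le (pow_nonneg h0 k)
  have hsq : T * T = (1 - u)⁻¹ := by
    rw [hT, tsum_mul_tsum_eq_tsum_sum_range_of_summable_norm hnorm hnorm]
    have hterm : ∀ n : ℕ, (∑ k ∈ Finset.range (n + 1), rr k * u ^ k * (rr (n - k) * u ^ (n - k)))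
        = u ^ n := by
      intro n
      have : ∀ k ∈ Finset.range (n + 1),
          rr k * u ^ k * (rr (n - k) * u ^ (n - k)) = (rr k * rr (n - k)) * u ^ n := by
        intro k hk
        have hkn : k ≤ n := by simpa [Nat.lt_succ_iff] using hk
        rw [show rr k * u ^ k * (rr (n - k) * u ^ (n - k)) =
          (rr k * rr (n - k)) * (u ^ k * u ^ (n - k)) by ring, ← pow_add,
          Nat.add_sub_cancel' hkn]
      rw [Finset.sum_congr rfl this, ← Finset.sum_mul, rr_conv, one_mul]
    rw [tsum_congr hterm, tsum_geometric_of_lt_one h0 h1]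
  have hs : 0 < Real.sqrt (1 - u) := Real.sqrt_pos.mpr hsub
  have h2 : (Real.sqrt (1 - u) * T) ^ 2 = 1 := by
    rw [mul_pow, Real.sq_sqrt hsub.le, sq, hsq, mul_inv_cancel₀ hsub.ne']
  have h3 : Real.sqrt (1 - u) * T = 1 := by
    have hzero : (Real.sqrt (1 - u) * T - 1) * (Real.sqrt (1 - u) * T + 1) = 0 := by
      linear_combination h2
    rcases mul_eq_zero.mp hzero with h | h
    · linarith
    · nlinarith [mul_nonneg hs.le hT0]
  have hTs : T = 1 / Real.sqrt (1 - u) := by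
    rw [eq_div_iff hs.ne']
    linear_combination h3
  rw [← hTs]
  exact hsum.hasSum

open intervalIntegral in
lemma integral_sin_pow_even' (k : ℕ) :
    (∫ t in (0:ℝ)..(π/2), Real.sin t ^ (2 * k)) = π / 2 * rr k := by
  induction k with
  | zero => simp [rr_zero]
  | succ n ih =>
    have h2 : 2 * (n + 1) = 2 * n + 2 := by ring
    rw [h2, integral_sin_pow]
    rw [Real.sin_zero, Real.cos_pi_div_two]
    rw [zero_pow (by omega : 2 * n + 1 ≠ 0), zero_mul, mul_zero, sub_zero]
    rw [zero_div, zero_add, ih, rr_succ]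
    push_cast
    ring

open intervalIntegral in
lemma wallis_W (k : ℕ) :
    (∫ t in (0:ℝ)..(π/2), Real.sin t ^ (2 * k) * Real.cos t ^ 2)
      = π / (4 * (k + 1)) * rr k := by
  have hcongr : ∀ t : ℝ, Real.sin t ^ (2 * k) * Real.cos t ^ 2
      = Real.sin t ^ (2 * k) - Real.sin t ^ (2 * (k + 1)) := by
    intro t
    have := Real.sin_sq_add_cos_sq t
    have hc : Real.cos t ^ 2 = 1 - Real.sin t ^ 2 := by linarith
    rw [hc]
    ring
  rw [intervalIntegral.integral_congr (fun t _ => hcongr t)]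
  rw [intervalIntegral.integral_sub (f := fun t => Real.sin t ^ (2 * k))
    (g := fun t => Real.sin t ^ (2 * (k + 1)))
    ((continuous_sin.pow _).intervalIntegrable _ _)
    ((continuous_sin.pow _).intervalIntegrable _ _)]
  rw [integral_sin_pow_even', integral_sin_pow_even', rr_succ]
  have hk : ((k:ℝ) + 1) ≠ 0 := by positivity
  field_simp
  ring


/-- The real Haagerup function. -/
noncomputable def haagerupReal (x : ℝ) : ℝ :=
  x * ∫ t in (0:ℝ)..(π / 2), Real.cos t ^ 2 / Real.sqrt (1 - x ^ 2 * Real.sin t ^ 2)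

open MeasureTheory in
theorem haagerupReal_hasSum_taylor :
    ∀ x ∈ Set.Icc (-1 : ℝ) 1,
      HasSum
        (fun k : ℕ => π / (4 * (k + 1)) *
          ((Nat.doubleFactorial (2 * k - 1) : ℝ) / (Nat.doubleFactorial (2 * k))) ^ 2 *
          x ^ (2 * k + 1))
        (haagerupReal x) := by
  intro x hx
  obtain ⟨hx1, hx2⟩ := hx
  have hx2' : x ^ 2 ≤ 1 := by nlinarith
  set μ : Measure ℝ := volume.restrict (Set.Ioc 0 (π/2)) with hμ
  set F : ℕ → ℝ → ℝ := fun k t => rr k * (x ^ 2 * Real.sin t ^ 2) ^ k * Real.cos t ^ 2 with hF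
  have hFcont : ∀ k, Continuous (F k) := by
    intro k; rw [hF]; fun_prop
  have hFnonneg : ∀ k t, 0 ≤ F k t := fun k t =>
    mul_nonneg (mul_nonneg (rr_pos k).le (pow_nonneg (by positivity) k)) (sq_nonneg _)
  have hFint : ∀ k, Integrable (F k) μ := fun k => (hFcont k).integrableOn_Ioc
  have hπ : (0:ℝ) ≤ π / 2 := by positivity
  have hFval : ∀ k, ∫ t, F k t ∂μ = π / (4 * (k + 1)) * rr k ^ 2 * x ^ (2 * k) := by
    intro k
    have h1 : ∫ t, F k t ∂μ = ∫ t in (0:ℝ)..(π/2), F k t := by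
      rw [intervalIntegral.integral_of_le hπ, hμ]
    have h2 : ∀ t : ℝ, F k t = (rr k * x ^ (2 * k)) * (Real.sin t ^ (2 * k) * Real.cos t ^ 2) := by
      intro t
      rw [hF]
      simp only [mul_pow, ← pow_mul]
      ring
    rw [h1, intervalIntegral.integral_congr (fun t _ => h2 t),
      intervalIntegral.integral_const_mul, wallis_W]
    ring
  -- summability of the integrals of norms
  have hx2k : ∀ k : ℕ, x ^ (2 * k) ≤ 1 := by
    intro k
    rw [pow_mul]
    exact pow_le_one₀ (sq_nonneg x) hx2'
  have hx2k0 : ∀ k : ℕ, 0 ≤ x ^ (2 * k) := by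
    intro k; rw [pow_mul]; positivity
  have hsummable₀ : Summable (fun k : ℕ => π / 4 * (1 / ((k:ℝ) + 1) ^ 2)) := by
    apply Summable.mul_left
    have h := Real.summable_one_div_nat_pow.mpr (by norm_num : 1 < 2)
    have h2 := (summable_nat_add_iff 1).mpr h
    exact h2.congr fun k => by push_cast; ring
  have hnormsum : Summable (fun k : ℕ => ∫ t, ‖F k t‖ ∂μ) := by
    have heq : ∀ k : ℕ, (∫ t, ‖F k t‖ ∂μ) = ∫ t, F k t ∂μ := by
      intro k
      congr 1
      funext t
      exact Real.norm_of_nonneg (hFnonneg k t)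
    refine Summable.of_nonneg_of_le (fun k => ?_) (fun k => ?_) hsummable₀
    · rw [heq k]
      exact integral_nonneg fun t => hFnonneg k t
    · rw [heq k, hFval k]
      have hb1 : rr k ^ 2 ≤ 1 / (2 * (k:ℝ) + 1) := by
        rw [le_div_iff₀ (by positivity)]
        exact rr_sq_le k
      have hb0 : (0:ℝ) < 2 * (k:ℝ) + 1 := by positivity
      calc π / (4 * ((k:ℝ) + 1)) * rr k ^ 2 * x ^ (2 * k)
          ≤ π / (4 * ((k:ℝ) + 1)) * rr k ^ 2 * 1 := by
            apply mul_le_mul_of_nonneg_left (hx2k k)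
            have := sq_nonneg (rr k)
            positivity
        _ ≤ π / (4 * ((k:ℝ) + 1)) * (1 / (2 * (k:ℝ) + 1)) * 1 := by
            apply mul_le_mul_of_nonneg_right _ zero_le_one
            exact mul_le_mul_of_nonneg_left hb1 (by positivity)
        _ ≤ π / 4 * (1 / ((k:ℝ) + 1) ^ 2) := by
            rw [mul_one]
            have h1 : π / (4 * ((k:ℝ) + 1)) * (1 / (2 * (k:ℝ) + 1))
                = π / (4 * (((k:ℝ) + 1) * (2 * (k:ℝ) + 1))) := by
              rw [div_mul_div_comm, mul_one]
              ring_nf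
            have h2 : π / 4 * (1 / ((k:ℝ) + 1) ^ 2) = π / (4 * ((k:ℝ) + 1) ^ 2) := by
              rw [div_mul_div_comm, mul_one]
            rw [h1, h2]
            apply div_le_div_of_nonneg_left Real.pi_pos.le (by positivity)
            nlinarith [sq_nonneg ((k:ℝ))]
  have hHasSum := MeasureTheory.hasSum_integral_of_summable_integral_norm hFint hnormsum
  have hres : μ = volume.restrict (Set.Ioo 0 (π/2)) := by
    rw [hμ, Measure.restrict_congr_set Ioo_ae_eq_Ioc]
  have hae : ∀ᵐ t ∂μ, (∑' k, F k t)
      = Real.cos t ^ 2 / Real.sqrt (1 - x ^ 2 * Real.sin t ^ 2) := by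
    rw [hres]
    filter_upwards [ae_restrict_mem measurableSet_Ioo] with t ht
    obtain ⟨ht0, ht1⟩ := ht
    have hpi := Real.pi_pos
    have hsin1 : Real.sin t < 1 := by
      have hmem1 : t ∈ Set.Icc (-(π/2)) (π/2) := ⟨by linarith, ht1.le⟩
      have hmem2 : π/2 ∈ Set.Icc (-(π/2)) (π/2) := ⟨by linarith, le_refl _⟩
      have := Real.strictMonoOn_sin hmem1 hmem2 ht1
      rwa [Real.sin_pi_div_two] at this
    have hsinn : 0 ≤ Real.sin t := Real.sin_nonneg_of_nonneg_of_le_pi ht0.le (by linarith)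
    have hu0 : 0 ≤ x ^ 2 * Real.sin t ^ 2 := by positivity
    have hu1 : x ^ 2 * Real.sin t ^ 2 < 1 := by nlinarith [sq_nonneg (Real.sin t), sq_nonneg x]
    have hps := (hasSum_rr hu0 hu1).mul_right (Real.cos t ^ 2)
    have htsum := hps.tsum_eq
    rw [hF]
    simp only []
    rw [htsum]
    ring
  have hintegrandeq : haagerupReal x = x * ∫ t, (∑' k, F k t) ∂μ := by
    rw [haagerupReal, intervalIntegral.integral_of_le hπ, ← hμ, integral_congr_ae hae]
  have hmul := hHasSum.mul_left x
  have hfunval : (fun k : ℕ => x * ∫ t, F k t ∂μ)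
      = fun k : ℕ => π / (4 * ((k:ℝ) + 1)) * rr k ^ 2 * x ^ (2 * k + 1) := by
    funext k
    rw [hFval k, pow_succ]
    ring
  rw [hfunval] at hmul
  show HasSum (fun k : ℕ => π / (4 * ((k:ℝ) + 1)) * rr k ^ 2 * x ^ (2 * k + 1)) (haagerupReal x)
  rw [hintegrandeq]
  exact hmul
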